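/- arXiv:1901.04009 — 2 statements merged into one kernel-verified Lean document; each statement's English description precedes it below -/
import Mathlib

section
/- Suppose w : [c, d] → ℝ is twice continuously differentiable, w ≥ 0, and satisfies ε²·w'' ≥ m·w on [c, d] for constants ε > 0 and m > 0. Then for all r ∈ [c, d], w(r) ≤ w(c)·exp(−(√m/ε)·(r − c)) + w(d)·exp(−(√m/ε)·(d − r)). -/
open Set Real

private lemma aux_max_principle (c d : ℝ) (hcd : c ≤ d) (g g' g'' : ℝ → ℝ)
    (hg' : ∀ r ∈ Set.Icc c d, HasDerivAt g (g' r) r)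
    (hg'' : ∀ r ∈ Set.Icc c d, HasDerivAt g' (g'' r) r)
    (hpos : ∀ r ∈ Set.Icc c d, 0 ≤ g r → 0 ≤ g'' r)
    (hc : g c ≤ 0) (hd : g d ≤ 0) :
    ∀ r ∈ Set.Icc c d, g r ≤ 0 := by
  by_contra h
  push_neg at h
  obtain ⟨x, hx, hxpos⟩ := h
  have hgc : ContinuousOn g (Set.Icc c d) := fun r hr => (hg' r hr).continuousAt.continuousWithinAt
  have hgc' : ContinuousOn g' (Set.Icc c d) :=
    fun r hr => (hg'' r hr).continuousAt.continuousWithinAt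
  obtain ⟨r₀, hr₀, hmax⟩ := (isCompact_Icc).exists_isMaxOn (nonempty_Icc.2 hcd) hgc
  have hr₀pos : 0 < g r₀ := lt_of_lt_of_le hxpos (hmax hx)
  have hr₀c : c < r₀ := by
    rcases lt_or_eq_of_le hr₀.1 with h | h
    · exact h
    · exact absurd (h ▸ hr₀pos) (not_lt.2 hc)
  have hr₀d : r₀ < d := by
    rcases lt_or_eq_of_le hr₀.2 with h | h
    · exact h
    · exact absurd (h ▸ hr₀pos) (not_lt.2 hd)
  have hloc : IsLocalMax g r₀ :=
    hmax.isLocalMax (Icc_mem_nhds hr₀c hr₀d)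
  have hg'r₀ : g' r₀ = 0 := hloc.hasDerivAt_eq_zero (hg' r₀ hr₀)
  -- the set of points to the right of r₀ where g ≤ 0
  set S : Set ℝ := Set.Icc r₀ d ∩ g ⁻¹' (Set.Iic 0) with hS
  have hSclosed : IsClosed S := by
    apply ContinuousOn.preimage_isClosed_of_isClosed
      (hgc.mono (Icc_subset_Icc hr₀.1 le_rfl)) isClosed_Icc isClosed_Iic
  have hdS : d ∈ S := ⟨⟨hr₀d.le, le_rfl⟩, hd⟩
  have hSne : S.Nonempty := ⟨d, hdS⟩
  have hSbdd : BddBelow S := ⟨r₀, fun y hy => hy.1.1⟩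
  set b := sInf S with hb
  have hbS : b ∈ S := hSclosed.csInf_mem hSne hSbdd
  have hr₀b : r₀ ≤ b := hbS.1.1
  have hbd : b ≤ d := hbS.1.2
  have hgb : g b ≤ 0 := hbS.2
  have hsub : Set.Icc r₀ b ⊆ Set.Icc c d := Icc_subset_Icc hr₀.1 (hbd.trans le_rfl)
  -- on [r₀, b), g ≥ 0
  have hgnn : ∀ r ∈ Set.Ico r₀ b, 0 ≤ g r := by
    intro r hr
    by_contra hneg
    push_neg at hneg
    have : r ∈ S := ⟨⟨hr.1, hr.2.le.trans hbd⟩, hneg.le⟩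
    exact absurd (csInf_le hSbdd this) (not_le.2 hr.2)
  have hint : interior (Set.Icc r₀ b) = Set.Ioo r₀ b := interior_Icc
  -- g' is monotone on [r₀, b]
  have hmono' : MonotoneOn g' (Set.Icc r₀ b) := by
    apply monotoneOn_of_deriv_nonneg (convex_Icc r₀ b) (hgc'.mono hsub)
    · intro x hx
      rw [hint] at hx
      exact ((hg'' x (hsub (Ioo_subset_Icc_self hx))).differentiableAt).differentiableWithinAt
    · intro x hx
      rw [hint] at hx
      have hxcd : x ∈ Set.Icc c d := hsub (Ioo_subset_Icc_self hx)
      rw [(hg'' x hxcd).deriv]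
      exact hpos x hxcd (hgnn x ⟨hx.1.le, hx.2⟩)
  -- hence g' ≥ 0 on [r₀, b], so g is monotone on [r₀, b]
  have hmono : MonotoneOn g (Set.Icc r₀ b) := by
    apply monotoneOn_of_deriv_nonneg (convex_Icc r₀ b) (hgc.mono hsub)
    · intro x hx
      rw [hint] at hx
      exact ((hg' x (hsub (Ioo_subset_Icc_self hx))).differentiableAt).differentiableWithinAt
    · intro x hx
      rw [hint] at hx
      have hxcd : x ∈ Set.Icc c d := hsub (Ioo_subset_Icc_self hx)
      rw [(hg' x hxcd).deriv]
      have := hmono' (Set.left_mem_Icc.2 hr₀b) (⟨hx.1.le, hx.2.le⟩ : x ∈ Set.Icc r₀ b) hx.1.le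
      rw [hg'r₀] at this
      exact this
  have : g r₀ ≤ g b :=
    hmono (Set.left_mem_Icc.2 hr₀b) (Set.right_mem_Icc.2 hr₀b) hr₀b
  linarith

theorem stmt_11 (c d ε m : ℝ) (hcd : c ≤ d) (hε : 0 < ε) (hm : 0 < m)
    (w w' w'' : ℝ → ℝ)
    (hw' : ∀ r ∈ Set.Icc c d, HasDerivAt w (w' r) r)
    (hw'' : ∀ r ∈ Set.Icc c d, HasDerivAt w' (w'' r) r)
    (hw''cont : ContinuousOn w'' (Set.Icc c d))
    (hwpos : ∀ r ∈ Set.Icc c d, 0 ≤ w r)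
    (hineq : ∀ r ∈ Set.Icc c d, m * w r ≤ ε ^ 2 * w'' r) :
    ∀ r ∈ Set.Icc c d,
      w r ≤ w c * Real.exp (-(Real.sqrt m / ε) * (r - c)) +
            w d * Real.exp (-(Real.sqrt m / ε) * (d - r)) := by
  set k := Real.sqrt m / ε with hkdef
  have hksq : k ^ 2 * ε ^ 2 = m := by
    rw [hkdef, div_pow, Real.sq_sqrt hm.le, div_mul_cancel₀ _ (by positivity : ε ^ 2 ≠ 0)]
  set v : ℝ → ℝ := fun r => w c * Real.exp (-k * (r - c)) + w d * Real.exp (-k * (d - r))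
    with hvdef
  set v' : ℝ → ℝ := fun r =>
    w c * (Real.exp (-k * (r - c)) * (-k)) + w d * (Real.exp (-k * (d - r)) * k) with hv'def
  have hvd : ∀ r, HasDerivAt v (v' r) r := by
    intro r
    have h1 : HasDerivAt (fun x : ℝ => -k * (x - c)) (-k) r := by
      simpa using ((hasDerivAt_id r).sub_const c).const_mul (-k)
    have h2 : HasDerivAt (fun x : ℝ => -k * (d - x)) k r := by
      simpa using ((hasDerivAt_id r).const_sub d).const_mul (-k)
    exact ((h1.exp.const_mul (w c)).add (h2.exp.const_mul (w d))).congr_deriv (by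
      simp only [hv'def]; try ring)
  have hvd' : ∀ r, HasDerivAt v' (k ^ 2 * v r) r := by
    intro r
    have h1 : HasDerivAt (fun x : ℝ => -k * (x - c)) (-k) r := by
      simpa using ((hasDerivAt_id r).sub_const c).const_mul (-k)
    have h2 : HasDerivAt (fun x : ℝ => -k * (d - x)) k r := by
      simpa using ((hasDerivAt_id r).const_sub d).const_mul (-k)
    exact (((h1.exp.mul_const (-k)).const_mul (w c)).add
      ((h2.exp.mul_const k).const_mul (w d))).congr_deriv (by
      simp only [hvdef]; ring)
  set g : ℝ → ℝ := fun r => w r - v r with hgdef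
  have key : ∀ r ∈ Set.Icc c d, g r ≤ 0 := by
    apply aux_max_principle c d hcd g (fun r => w' r - v' r)
      (fun r => w'' r - k ^ 2 * v r)
    · exact fun r hr => (hw' r hr).sub (hvd r)
    · exact fun r hr => (hw'' r hr).sub (hvd' r)
    · intro r hr hg
      have h1 := hineq r hr
      have hgr : v r ≤ w r := by simpa [hgdef, sub_nonneg] using hg
      have hε2 : (0:ℝ) < ε ^ 2 := by positivity
      have h2 : k ^ 2 * v r ≤ k ^ 2 * w r := mul_le_mul_of_nonneg_left hgr (sq_nonneg k)
      have h3 : ε ^ 2 * (k ^ 2 * w r) = m * w r := by rw [← hksq]; ring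
      have h4 : ε ^ 2 * (k ^ 2 * v r) ≤ ε ^ 2 * (k ^ 2 * w r) :=
        mul_le_mul_of_nonneg_left h2 hε2.le
      nlinarith [h1, h3, h4, hε2]
    · have : g c = - (w d * Real.exp (-k * (d - c))) := by
        simp [hgdef, hvdef]
      rw [this]
      exact neg_nonpos.2 (mul_nonneg (hwpos d (Set.right_mem_Icc.2 hcd)) (Real.exp_pos _).le)
    · have : g d = - (w c * Real.exp (-k * (d - c))) := by
        simp [hgdef, hvdef]
      rw [this]
      exact neg_nonpos.2 (mul_nonneg (hwpos c (Set.left_mem_Icc.2 hcd)) (Real.exp_pos _).le)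
  intro r hr
  have := key r hr
  simp only [hgdef, hvdef, sub_nonpos] at this
  simpa [neg_div] using this
end

section
/- Let w : [c, d] → ℝ be twice continuously differentiable with w(r) ≥ 0, w'(c) = 0, and ε²·(w''(r) + ((N−1)/r)·w'(r)) ≥ m·w(r) on (c, d) for constants ε > 0, m > 0, N ≥ 1, 0 < c < d. If additionally w'(r₀) = 0 for some r₀ ∈ (c, d), then ∫_c^{r₀} r^{N−1}·w(r) dr ≤ 0, hence w ≡ 0 on [c, r₀]. -/
/-!
Multiplying the inequality by `r ^ (N - 1)` turns its right-hand side into the derivative of the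
flux `ε ^ 2 * r ^ (N - 1) * w' r`, which vanishes at `c` and at `r₀`. Integrating over `[c, r₀]`
gives `m * ∫ r ^ (N - 1) * w ≤ 0`; as the integrand is continuous and nonnegative, it vanishes.
-/

open MeasureTheory Set intervalIntegral

theorem ContinuousOn.eqOn_zero_of_integral_nonpos {f : ℝ → ℝ} {a b : ℝ} (hab : a < b)
    (hf : ContinuousOn f (Icc a b)) (hf₀ : ∀ x ∈ Icc a b, 0 ≤ f x)
    (hint : ∫ x in a..b, f x ≤ 0) : EqOn f 0 (Icc a b) := by
  have hfi : IntervalIntegrable f volume a b := hf.intervalIntegrable_of_Icc hab.le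
  have hnonneg : 0 ≤ᵐ[volume.restrict (Icc a b)] f :=
    (ae_restrict_iff' measurableSet_Icc).2 (.of_forall hf₀)
  have hzero : ∫ x in a..b, f x = 0 :=
    hint.antisymm (integral_nonneg hab.le hf₀)
  rw [integral_eq_zero_iff_of_le_of_nonneg_ae hab.le
    (ae_restrict_of_ae_eq_of_ae_restrict Ioc_ae_eq_Icc.symm hnonneg) hfi] at hzero
  exact Measure.eqOn_Icc_of_ae_eq volume hab.ne
    (ae_restrict_of_ae_eq_of_ae_restrict Ioc_ae_eq_Icc hzero) hf continuousOn_const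

theorem HasDerivAt.rpow_sub_one_mul {f : ℝ → ℝ} {f' x : ℝ} (N : ℝ) (hx : 0 < x)
    (hf : HasDerivAt f f' x) :
    HasDerivAt (fun r => r ^ (N - 1) * f r) (x ^ (N - 1) * (f' + (N - 1) / x * f x)) x := by
  refine ((Real.hasDerivAt_rpow_const (p := N - 1) (Or.inl hx.ne')).mul hf).congr_deriv ?_
  rw [Real.rpow_sub_one hx.ne']
  field_simp
  ring

theorem stmt_18_general (c d r₀ ε m N : ℝ) (hc : 0 < c)
    (hm : 0 < m) (hr₀ : r₀ ∈ Set.Ioo c d)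
    (w w' w'' : ℝ → ℝ)
    (hw' : ∀ r ∈ Set.Icc c d, HasDerivAt w (w' r) r)
    (hw'' : ∀ r ∈ Set.Icc c d, HasDerivAt w' (w'' r) r)
    (hwpos : ∀ r ∈ Set.Icc c d, 0 ≤ w r)
    (hw'c : w' c = 0) (hw'r₀ : w' r₀ = 0)
    (hineq : ∀ r ∈ Set.Ioo c d,
      m * w r ≤ ε ^ 2 * (w'' r + (N - 1) / r * w' r)) :
    (∫ r in c..r₀, r ^ (N - 1) * w r) ≤ 0 ∧ ∀ r ∈ Set.Icc c r₀, w r = 0 := by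
  obtain ⟨hcr₀, hr₀d⟩ := hr₀
  have hsub : Icc c r₀ ⊆ Icc c d := Icc_subset_Icc_right hr₀d.le
  have hpos : ∀ r ∈ Icc c r₀, 0 < r ^ (N - 1) := fun r hr =>
    Real.rpow_pos_of_pos (hc.trans_le hr.1) _
  have hcont : ContinuousOn (fun r => r ^ (N - 1) * w r) (Icc c r₀) := fun r hr =>
    ((Real.continuousAt_rpow_const r _ (Or.inl (hc.trans_le hr.1).ne')).mul
      (hw' r (hsub hr)).continuousAt).continuousWithinAt
  have hflux : ∀ r ∈ Icc c r₀, HasDerivAt (fun r => ε ^ 2 * (r ^ (N - 1) * w' r))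
      (ε ^ 2 * (r ^ (N - 1) * (w'' r + (N - 1) / r * w' r))) r := fun r hr =>
    ((hw'' r (hsub hr)).rpow_sub_one_mul N (hc.trans_le hr.1)).const_mul _
  have hle : ∫ r in c..r₀, m * (r ^ (N - 1) * w r) ≤ 0 := by
    simpa [hw'c, hw'r₀] using integral_le_sub_of_hasDeriv_right_of_le hcr₀.le
      (fun r hr => (hflux r hr).continuousAt.continuousWithinAt)
      (fun r hr => (hflux r (Ioo_subset_Icc_self hr)).hasDerivWithinAt)
      (hcont.const_mul m).integrableOn_Icc fun r hr => by
        simpa only [mul_left_comm] using mul_le_mul_of_nonneg_left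
          (hineq r ⟨hr.1, hr.2.trans hr₀d⟩) (hpos r (Ioo_subset_Icc_self hr)).le
  have hint : ∫ r in c..r₀, r ^ (N - 1) * w r ≤ 0 := by
    rw [intervalIntegral.integral_const_mul] at hle
    exact nonpos_of_mul_nonpos_right hle hm
  refine ⟨hint, fun r hr => ?_⟩
  have hzero := hcont.eqOn_zero_of_integral_nonpos hcr₀
    (fun r hr => mul_nonneg (hpos r hr).le (hwpos r (hsub hr))) hint hr
  exact (mul_eq_zero.1 hzero).resolve_left (hpos r hr).ne'

theorem stmt_18 (c d r₀ ε m N : ℝ) (hc : 0 < c) (hcd : c < d) (hε : 0 < ε)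
    (hm : 0 < m) (hN : 1 ≤ N) (hr₀ : r₀ ∈ Set.Ioo c d)
    (w w' w'' : ℝ → ℝ)
    (hw' : ∀ r ∈ Set.Icc c d, HasDerivAt w (w' r) r)
    (hw'' : ∀ r ∈ Set.Icc c d, HasDerivAt w' (w'' r) r)
    (hw''cont : ContinuousOn w'' (Set.Icc c d))
    (hwpos : ∀ r ∈ Set.Icc c d, 0 ≤ w r)
    (hw'c : w' c = 0) (hw'r₀ : w' r₀ = 0)
    (hineq : ∀ r ∈ Set.Ioo c d,
      m * w r ≤ ε ^ 2 * (w'' r + (N - 1) / r * w' r)) :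
    (∫ r in c..r₀, r ^ (N - 1) * w r) ≤ 0 ∧ ∀ r ∈ Set.Icc c r₀, w r = 0 :=
  stmt_18_general c d r₀ ε m N hc hm hr₀ w w' w'' hw' hw'' hwpos hw'c hw'r₀ hineq
end
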